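/- arXiv:1909.04135 — 6 statements merged into one kernel-verified Lean document; each statement's English description precedes it below -/
import Mathlib

section
/- Let G be a finite directed acyclic graph and S a nonempty set of vertices that is path-complete (for any directed path whose two endpoints lie in S, all vertices of the path lie in S) and parent-complete (for any vertex v in S of in-degree 2, if one in-neighbor of v is in S then so is the other). Then every vertex of S that has an in-neighbor outside S is minimal in S with respect to the reachability partial order (no other element of S reaches it). -/
theorem stmt_0_general {V : Type*} (E : V → V → Prop)
    (S : Set V)
    (hpath : ∀ u v w : V, u ∈ S → v ∈ S →
      Relation.ReflTransGen E u w → Relation.ReflTransGen E w v → w ∈ S)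
    (hparent : ∀ v ∈ S, ∀ u₁ u₂ : V, E u₁ v → E u₂ v → u₁ ∈ S → u₂ ∈ S)
    (v : V) (hv : v ∈ S) (u : V) (hu : E u v) (huS : u ∉ S) :
    ∀ w ∈ S, w ≠ v → ¬ Relation.ReflTransGen E w v := by
  intro w hw hne hwv
  obtain rfl | ⟨x, hwx, hxv⟩ := hwv.cases_tail
  · exact hne rfl
  have hxS : x ∈ S := hpath w v x hw hv hwx (.single hxv)
  exact huS (hparent v hv x u hxv hu hxS)

theorem stmt_0 {V : Type*} [Fintype V] (E : V → V → Prop)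
    (hacyc : ∀ u v : V, Relation.ReflTransGen E u v → Relation.ReflTransGen E v u → u = v)
    (hdeg : ∀ v : V, Set.ncard {u : V | E u v} ≤ 2)
    (S : Set V) (hS : S.Nonempty)
    (hpath : ∀ u v w : V, u ∈ S → v ∈ S →
      Relation.ReflTransGen E u w → Relation.ReflTransGen E w v → w ∈ S)
    (hparent : ∀ v ∈ S, ∀ u₁ u₂ : V, E u₁ v → E u₂ v → u₁ ∈ S → u₂ ∈ S)
    (v : V) (hv : v ∈ S) (u : V) (hu : E u v) (huS : u ∉ S) :
    ∀ w ∈ S, w ≠ v → ¬ Relation.ReflTransGen E w v :=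
  stmt_0_general E S hpath hparent v hv u hu huS
end

section
/- Let Π be a connected resolution refutation of CNF τ and S ⊊ var(Π). If t is the number of resolution steps in Π whose resolved variable belongs to S, then the refutation del_S(Π) produced by the variable-deletion algorithm (after contracting dummy weakenings) has size at most |Π| − t. -/
abbrev Var := ℕ
abbrev Lit := Var × Bool
abbrev Clause := Finset Lit

def Clause.vars (C : Clause) : Finset Var := C.image Prod.fst

abbrev Assignment := Var → Option Bool

def litSat (σ : Assignment) (l : Lit) : Prop := σ l.1 = some l.2
def litFalse (σ : Assignment) (l : Lit) : Prop := σ l.1 = some (!l.2)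

def Clause.falsified (σ : Assignment) (C : Clause) : Prop := ∀ l ∈ C, litFalse σ l

def resolve (x : Var) (C D : Clause) : Clause :=
  C.filter (fun l => l.1 ≠ x) ∪ D.filter (fun l => l.1 ≠ x)

def resolvableOn (x : Var) (C D : Clause) : Prop :=
  (∃ a : Bool, (x, a) ∈ C ∧ (x, !a) ∈ D) ∧
    ∀ (y : Var) (b : Bool), y ≠ x → (y, b) ∈ C → (y, !b) ∉ D
structure ResDag (V : Type) where
  clause : V → Clause
  prem : V → Option (V × V × Var)
  res_ok : ∀ (v : V) (p : V × V × Var), prem v = some p →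
    (∃ a : Bool, (p.2.2, a) ∈ clause p.1 ∧ (p.2.2, !a) ∈ clause p.2.1) ∧
      clause v = resolve p.2.2 (clause p.1) (clause p.2.1)
  wf : WellFounded (fun u v : V =>
    ∃ p : V × V × Var, prem v = some p ∧ (u = p.1 ∨ u = p.2.1))

def ResDag.parent {V : Type} (G : ResDag V) (u v : V) : Prop :=
  ∃ p : V × V × Var, G.prem v = some p ∧ (u = p.1 ∨ u = p.2.1)

def ResDag.reach {V : Type} (G : ResDag V) : V → V → Prop :=
  Relation.ReflTransGen (ResDag.parent G)

def delS (S : Finset Var) (C : Clause) : Clause := C.filter (fun l => l.1 ∉ S)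
structure DelRun {V : Type} (G : ResDag V) (S : Finset Var) where
  deleted : V → Prop
  c' : V → Clause
  ax_del : ∀ v : V, G.prem v = none → (deleted v ↔ delS S (G.clause v) = ∅)
  ax_keep : ∀ v : V, G.prem v = none → ¬ deleted v → c' v = delS S (G.clause v)
  res_del : ∀ (v : V) (p : V × V × Var), G.prem v = some p →
    deleted p.1 → deleted p.2.1 → deleted v
  res_surv : ∀ (v : V) (p : V × V × Var), G.prem v = some p →
    (¬ deleted p.1 ∨ ¬ deleted p.2.1) → ¬ deleted v
  res_resolve : ∀ (v : V) (p : V × V × Var), G.prem v = some p →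
    ¬ deleted p.1 → ¬ deleted p.2.1 → resolvableOn p.2.2 (c' p.1) (c' p.2.1) →
    c' v = resolve p.2.2 (c' p.1) (c' p.2.1)
  res_weak : ∀ (v : V) (p : V × V × Var), G.prem v = some p →
    (¬ deleted p.1 ∨ ¬ deleted p.2.1) →
    ¬ (¬ deleted p.1 ∧ ¬ deleted p.2.1 ∧ resolvableOn p.2.2 (c' p.1) (c' p.2.1)) →
    ∃ u : V, (u = p.1 ∨ u = p.2.1) ∧ ¬ deleted u ∧
      c' u ⊆ delS S (G.clause v) ∧ c' v = c' u

/-! Every clause that survives the deletion run lives outside `S`: axioms are cut down to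
`delS S`, genuine resolvents only keep literals of their premises, and dummy weakenings copy a
surviving premise. Hence a surviving genuine resolution step resolves on a variable outside `S`,
so the surviving lines and the resolution steps on `S` are disjoint sets of nodes of `Π`. -/

theorem Set.ncard_le_card_sub_ncard_of_disjoint {α : Type*} [Fintype α] {s t : Set α}
    (h : Disjoint s t) : s.ncard ≤ Fintype.card α - t.ncard := by
  have hcompl := Set.ncard_add_ncard_compl t
  rw [Nat.card_eq_fintype_card] at hcompl
  have := Set.ncard_le_ncard (Set.subset_compl_iff_disjoint_right.mpr h) (Set.toFinite _)
  omega

namespace DelRun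

variable {V : Type} {G : ResDag V} {S : Finset Var} (R : DelRun G S)

theorem not_deleted_premise {v : V} {p : V × V × Var} (hp : G.prem v = some p)
    (hv : ¬ R.deleted v) : ¬ R.deleted p.1 ∨ ¬ R.deleted p.2.1 := by
  by_contra! h
  exact hv (R.res_del v p hp h.1 h.2)

theorem fst_notMem {v : V} (hv : ¬ R.deleted v) {l : Lit} (hl : l ∈ R.c' v) : l.1 ∉ S := by
  induction v using G.wf.induction with
  | _ v ih =>
    cases hp : G.prem v with
    | none =>
      rw [R.ax_keep v hp hv, delS, Finset.mem_filter] at hl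
      exact hl.2
    | some p =>
      by_cases hres : ¬ R.deleted p.1 ∧ ¬ R.deleted p.2.1 ∧
          resolvableOn p.2.2 (R.c' p.1) (R.c' p.2.1)
      · obtain ⟨h1, h2, hrv⟩ := hres
        rw [R.res_resolve v p hp h1 h2 hrv, resolve, Finset.mem_union, Finset.mem_filter,
          Finset.mem_filter] at hl
        rcases hl with ⟨hl, -⟩ | ⟨hl, -⟩
        · exact ih p.1 ⟨p, hp, Or.inl rfl⟩ h1 hl
        · exact ih p.2.1 ⟨p, hp, Or.inr rfl⟩ h2 hl
      · obtain ⟨u, -, -, hsub, heq⟩ :=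
          R.res_weak v p hp (R.not_deleted_premise hp hv) hres
        rw [heq] at hl
        exact (Finset.mem_filter.mp (hsub hl)).2

theorem resolved_var_notMem {x : Var} {u w : V} (hu : ¬ R.deleted u)
    (hres : resolvableOn x (R.c' u) (R.c' w)) : x ∉ S :=
  let ⟨⟨_, ha, _⟩, _⟩ := hres
  R.fst_notMem hu ha

end DelRun

theorem stmt_7_general {V : Type} [Fintype V] (G : ResDag V)
    (S : Finset Var)
    (R : DelRun G S) :
    -- the lines surviving after contracting dummy weakenings are the surviving
    -- axiom nodes and the surviving genuine resolution nodes; there are at most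
    -- |Π| − t of them, where t is the number of resolution steps on variables in S
    Set.ncard {v : V | ¬ R.deleted v ∧ (G.prem v = none ∨
        ∃ p : V × V × Var, G.prem v = some p ∧ ¬ R.deleted p.1 ∧ ¬ R.deleted p.2.1 ∧
          resolvableOn p.2.2 (R.c' p.1) (R.c' p.2.1))}
      ≤ Fintype.card V -
          Set.ncard {v : V | ∃ p : V × V × Var, G.prem v = some p ∧ p.2.2 ∈ S} := by
  refine Set.ncard_le_card_sub_ncard_of_disjoint (Set.disjoint_left.mpr ?_)
  rintro v ⟨-, hax | ⟨p', hp', h1, -, hres⟩⟩ ⟨p, hp, hpS⟩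
  · simp [hp] at hax
  · obtain rfl : p' = p := Option.some_injective _ (hp'.symm.trans hp)
    exact R.resolved_var_notMem h1 hres hpS

theorem stmt_7 {V : Type} [Fintype V] (G : ResDag V) (root : V)
    (hroot : G.clause root = ∅) (hconn : ∀ v : V, ResDag.reach G v root)
    (S : Finset Var)
    (hSsub : ∀ x ∈ S, ∃ v : V, x ∈ Clause.vars (G.clause v))
    (hproper : ∃ y : Var, (∃ v : V, y ∈ Clause.vars (G.clause v)) ∧ y ∉ S)
    (R : DelRun G S) :
    -- the lines surviving after contracting dummy weakenings are the surviving
    -- axiom nodes and the surviving genuine resolution nodes; there are at most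
    -- |Π| − t of them, where t is the number of resolution steps on variables in S
    Set.ncard {v : V | ¬ R.deleted v ∧ (G.prem v = none ∨
        ∃ p : V × V × Var, G.prem v = some p ∧ ¬ R.deleted p.1 ∧ ¬ R.deleted p.2.1 ∧
          resolvableOn p.2.2 (R.c' p.1) (R.c' p.2.1))}
      ≤ Fintype.card V -
          Set.ncard {v : V | ∃ p : V × V × Var, G.prem v = some p ∧ p.2.2 ∈ S} :=
  stmt_7_general G S R
end

section
/- Let Π be a connected resolution refutation of τ with x ∈ var(Π), and let Π' be the downward closure of any occurrence of the empty clause in the restricted refutation Π|_{x=a}. Then τ contains a clause containing the literal x^{1−a}. -/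
/-!
A literal `(x, b)` occurring in a connected refutation must disappear on the way down to the
empty clause, and only a resolution step on `x` can remove it; the other premise of that step
contains `(x, !b)`. So both polarities of every variable of the refutation occur in it, and
tracing the occurrence of `(x, !a)` up through the premises ends at an axiom, i.e. a clause of `τ`.
-/

theorem mem_resolve {x : Var} {C D : Clause} {l : Lit} :
    l ∈ resolve x C D ↔ (l ∈ C ∨ l ∈ D) ∧ l.1 ≠ x := by
  simp only [resolve, Finset.mem_union, Finset.mem_filter, or_and_right]

namespace ResDag

variable {V : Type} (G : ResDag V)

theorem exists_axiom_mem {l : Lit} (v : V) (hl : l ∈ G.clause v) :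
    ∃ u, G.prem u = none ∧ l ∈ G.clause u := by
  induction v using G.wf.induction with
  | _ v ih =>
    cases h : G.prem v with
    | none => exact ⟨v, h, hl⟩
    | some p =>
      rw [(G.res_ok v p h).2, mem_resolve] at hl
      rcases hl.1 with hl₁ | hl₂
      · exact ih p.1 ⟨p, h, Or.inl rfl⟩ hl₁
      · exact ih p.2.1 ⟨p, h, Or.inr rfl⟩ hl₂

theorem mem_or_exists_neg_of_parent {u v : V} (huv : G.parent u v) {x : Var} {b : Bool}
    (hu : (x, b) ∈ G.clause u) : (x, b) ∈ G.clause v ∨ ∃ w, (x, !b) ∈ G.clause w := by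
  obtain ⟨p, hp, hup⟩ := huv
  obtain ⟨⟨c, hc₁, hc₂⟩, hv⟩ := G.res_ok v p hp
  by_cases hx : p.2.2 = x
  · subst hx
    right
    by_cases hcb : c = b
    · exact ⟨p.2.1, hcb ▸ hc₂⟩
    · exact ⟨p.1, Bool.eq_not_of_ne hcb ▸ hc₁⟩
  · left
    rw [hv, mem_resolve]
    refine ⟨?_, Ne.symm hx⟩
    rcases hup with rfl | rfl
    exacts [Or.inl hu, Or.inr hu]

theorem exists_mem_neg_of_reach {root : V} (hroot : G.clause root = ∅) {v : V}
    (hv : G.reach v root) {x : Var} {b : Bool} (hl : (x, b) ∈ G.clause v) :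
    ∃ w, (x, !b) ∈ G.clause w := by
  induction hv using Relation.ReflTransGen.head_induction_on with
  | refl => simp [hroot] at hl
  | head huv _ ih =>
    rcases G.mem_or_exists_neg_of_parent huv hl with h | h
    exacts [ih h, h]

theorem exists_mem_of_mem_vars {root : V} (hroot : G.clause root = ∅)
    (hconn : ∀ v, G.reach v root) {x : Var} {v : V} (hx : x ∈ (G.clause v).vars) (c : Bool) :
    ∃ w, (x, c) ∈ G.clause w := by
  obtain ⟨⟨y, b⟩, hl, rfl⟩ := Finset.mem_image.mp hx
  by_cases hbc : b = c
  · exact ⟨v, hbc ▸ hl⟩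
  · simpa [Bool.eq_not_of_ne hbc] using G.exists_mem_neg_of_reach hroot (hconn v) hl

end ResDag

theorem stmt_9_general {V : Type} (G : ResDag V) (root : V)
    (hroot : G.clause root = ∅) (hconn : ∀ v : V, ResDag.reach G v root)
    (τ : Set Clause) (hax : ∀ v : V, G.prem v = none → G.clause v ∈ τ)
    (x : Var) (hx : ∃ v : V, x ∈ Clause.vars (G.clause v)) (a : Bool) :
    ∃ C ∈ τ, (x, !a) ∈ C := by
  obtain ⟨v, hv⟩ := hx
  obtain ⟨w, hw⟩ := G.exists_mem_of_mem_vars hroot hconn hv (!a)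
  obtain ⟨u, hu, hlu⟩ := G.exists_axiom_mem w hw
  exact ⟨G.clause u, hax u hu, hlu⟩

theorem stmt_9 {V : Type} [Fintype V] (G : ResDag V) (root : V)
    (hroot : G.clause root = ∅) (hconn : ∀ v : V, ResDag.reach G v root)
    (τ : Set Clause) (hax : ∀ v : V, G.prem v = none → G.clause v ∈ τ)
    (x : Var) (hx : ∃ v : V, x ∈ Clause.vars (G.clause v)) (a : Bool) :
    ∃ C ∈ τ, (x, !a) ∈ C :=
  stmt_9_general G root hroot hconn τ hax x hx a
end

section
/- For the r-ary parity substitution τₙ[⊕_r] of a minimally unsatisfiable CNF τₙ containing all n variables, the column-major order π on the substituted variables y_{i,j} (ordering first by j, then by i) is ((r−2)n)-robust. -/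
def satisfiesC (α : Var → Bool) (C : Clause) : Prop := ∃ l ∈ C, α l.1 = l.2

def Unsat (τ : Set Clause) : Prop := ∀ α : Var → Bool, ∃ C ∈ τ, ¬ satisfiesC α C

def MinUnsat (τ : Set Clause) : Prop :=
  Unsat τ ∧ ∀ τ' : Set Clause, τ' ⊂ τ → ∃ α : Var → Bool, ∀ C ∈ τ', satisfiesC α C
def VarPw (n w : ℕ) (π : Var → ℕ) : Set Var := {x | x < n ∧ π x < w}

def clSatBy (σ : Assignment) (C : Clause) : Prop := ∃ l ∈ C, litSat σ l

def restrictClause (σ : Assignment) (C : Clause) : Clause :=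
  C.filter (fun l => σ l.1 = none)

def restrictCNF (σ : Assignment) (τ : Set Clause) : Set Clause :=
  {D | ∃ C ∈ τ, ¬ clSatBy σ C ∧ D = restrictClause σ C}

def Robust (n w : ℕ) (π : Var → ℕ) (τ : Set Clause) : Prop :=
  ∀ σ : Assignment, (∀ x : Var, σ x ≠ none → x < n) →
    ({x : Var | σ x ≠ none ∧ x ∉ VarPw n w π}).Subsingleton →
    MinUnsat (restrictCNF σ τ) ∧
      ∀ x : Var, σ x ≠ none → ∃ C ∈ τ, ¬ clSatBy σ C ∧ x ∈ Clause.vars C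

/-- The CNF encoding of the r-ary parity substitution τ[⊕_r]: each variable `i < n`
is replaced by the XOR of the fresh variables `y_{i,j}`, encoded as `j*n + i`
(so that the identity order on ℕ is exactly the column-major order). -/
def ParitySub (n r : ℕ) (τ : Set Clause) : Set Clause :=
  {D | ∃ C ∈ τ, ∃ c : Var → Fin r → Bool,
    (∀ l ∈ C, ((Finset.univ : Finset (Fin r)).filter (fun j => c l.1 j = true)).card % 2
        = (if l.2 then 0 else 1)) ∧
    D = C.biUnion (fun l =>
      (Finset.univ : Finset (Fin r)).image (fun j : Fin r => (j.val * n + l.1, ! c l.1 j)))}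

/-!
A restriction allowed by the robustness condition assigns at most one variable of the last two
columns, so it leaves a variable of every group `y_{i,·}` free, and a free variable lets a group
consistent with the restriction take either parity.

The restricted substitution is unsatisfiable because decoding any total assignment by group
parities falsifies some clause of `τ`. For minimality, drop the restriction of the clause
coming from `C₀ ∈ τ` and group values `c₀`: an assignment that falsifies only `C₀` lifts to one
consistent with the restriction that gives the groups of `C₀` the values `c₀` and every other
group the prescribed parity, and this lift satisfies all remaining substituted clauses. Lifting
in the same way an assignment that falsifies a clause containing `x_i` yields, for each
assigned `y_{i,j}`, a substituted clause mentioning it that the restriction does not satisfy.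
-/

open Finset

section Restriction

def extendAssignment (σ : Assignment) (α : Var → Bool) : Var → Bool :=
  fun x => (σ x).getD (α x)

lemma extendAssignment_idem (σ : Assignment) (α : Var → Bool) :
    extendAssignment σ (extendAssignment σ α) = extendAssignment σ α := by
  funext x
  cases h : σ x <;> simp [extendAssignment, h]

lemma satisfiesC_extendAssignment_iff {σ : Assignment} {α : Var → Bool} {C : Clause} :
    satisfiesC (extendAssignment σ α) C ↔ clSatBy σ C ∨ satisfiesC α (restrictClause σ C) := by
  constructor
  · rintro ⟨l, hl, h⟩
    cases hσ : σ l.1 with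
    | none =>
      exact Or.inr ⟨l, mem_filter.2 ⟨hl, hσ⟩, by simpa [extendAssignment, hσ] using h⟩
    | some v =>
      exact Or.inl ⟨l, hl, by simpa [litSat, extendAssignment, hσ] using h⟩
  · rintro (⟨l, hl, h⟩ | ⟨l, hl, h⟩)
    · exact ⟨l, hl, by simp_all [litSat, extendAssignment]⟩
    · obtain ⟨hl, hσ⟩ := mem_filter.1 hl
      exact ⟨l, hl, by simp_all [extendAssignment]⟩

lemma Unsat.restrictCNF {τ : Set Clause} (h : Unsat τ) (σ : Assignment) :
    Unsat (restrictCNF σ τ) := by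
  intro α
  obtain ⟨C, hC, hns⟩ := h (extendAssignment σ α)
  rw [satisfiesC_extendAssignment_iff, not_or] at hns
  exact ⟨_, ⟨C, hC, hns.1, rfl⟩, hns.2⟩

lemma MinUnsat.exists_critical {τ : Set Clause} (hmin : MinUnsat τ) {C₀ : Clause}
    (hC₀ : C₀ ∈ τ) :
    ∃ a : Var → Bool, (∀ C ∈ τ, C ≠ C₀ → satisfiesC a C) ∧ ¬ satisfiesC a C₀ := by
  obtain ⟨a, ha⟩ := hmin.2 (τ \ {C₀}) (Set.sdiff_singleton_ssubset.2 hC₀)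
  refine ⟨a, fun C hC hne => ha C ⟨hC, hne⟩, fun hsat => ?_⟩
  obtain ⟨C, hC, hns⟩ := hmin.1 a
  obtain rfl | hne := eq_or_ne C C₀
  · exact hns hsat
  · exact hns (ha C ⟨hC, hne⟩)

end Restriction

section Parity

variable {r : ℕ}

def parity (g : Fin r → Bool) : Bool := decide (#{j | g j = true} % 2 = 1)

lemma card_filter_mod_two_eq_ite_iff (g : Fin r → Bool) (b : Bool) :
    #{j | g j = true} % 2 = (if b then 0 else 1) ↔ parity g = !b := by
  cases b <;> simp [parity]

lemma parity_update_true (g : Fin r → Bool) (J : Fin r) :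
    parity (Function.update g J true) = !parity (Function.update g J false) := by
  have hcard : #{j | Function.update g J true j = true}
      = #{j | Function.update g J false j = true} + 1 := by
    rw [← card_insert_of_notMem (s := {j | Function.update g J false j = true}) (a := J)
      (by simp)]
    congr 1
    ext j
    by_cases hj : j = J <;> simp [hj]
  simp only [parity, hcard]
  cases Nat.mod_two_eq_zero_or_one #{j | Function.update g J false j = true} <;>
    simp [Nat.add_mod, *]

lemma exists_parity_eq_of_eq_none {p : Fin r → Option Bool} {J : Fin r} (hJ : p J = none)
    (b : Bool) : ∃ g : Fin r → Bool, parity g = b ∧ ∀ j v, p j = some v → g j = v := by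
  set base : Fin r → Bool := fun j => (p j).getD false
  have hext : ∀ c : Bool, ∀ j v, p j = some v → Function.update base J c j = v := by
    intro c j v hv
    have hj : j ≠ J := by rintro rfl; simp_all
    simp [Function.update_of_ne hj, base, hv]
  by_cases h : parity (Function.update base J false) = b
  · exact ⟨_, h, hext false⟩
  · exact ⟨_, by rw [parity_update_true]; cases b <;> simp_all, hext true⟩

end Parity

section Expansion

variable {n r : ℕ}

/-- Falsified exactly by the assignments giving each group `y_{i,·}`, `i ∈ C.vars`, the values
`c i`. -/
def expand (n : ℕ) (C : Clause) (c : Var → Fin r → Bool) : Clause :=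
  C.biUnion fun l => univ.image fun j : Fin r => (j.val * n + l.1, !c l.1 j)

lemma expand_congr {C : Clause} {c c' : Var → Fin r → Bool} (h : ∀ l ∈ C, c l.1 = c' l.1) :
    expand n C c = expand n C c' :=
  biUnion_congr rfl fun l hl => by rw [h l hl]

lemma mem_paritySub_iff {τ : Set Clause} {D : Clause} :
    D ∈ ParitySub n r τ ↔
      ∃ C ∈ τ, ∃ c : Var → Fin r → Bool, (∀ l ∈ C, parity (c l.1) = !l.2) ∧ D = expand n C c := by
  simp only [ParitySub, Set.mem_ofPred_eq, card_filter_mod_two_eq_ite_iff]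
  rfl

lemma mem_expand {C : Clause} {c : Var → Fin r → Bool} {l : Lit} :
    l ∈ expand n C c ↔ ∃ l' ∈ C, ∃ j : Fin r, l = (j.val * n + l'.1, !c l'.1 j) := by
  simp [expand, eq_comm]

lemma satisfiesC_expand_iff {β : Var → Bool} {C : Clause} {c : Var → Fin r → Bool} :
    satisfiesC β (expand n C c) ↔ ∃ l ∈ C, ∃ j : Fin r, β (j.val * n + l.1) ≠ c l.1 j := by
  constructor
  · rintro ⟨_, hmem, h⟩
    obtain ⟨l, hl, j, rfl⟩ := mem_expand.1 hmem
    exact ⟨l, hl, j, Bool.eq_not_iff.1 h⟩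
  · rintro ⟨l, hl, j, h⟩
    exact ⟨_, mem_expand.2 ⟨l, hl, j, rfl⟩, Bool.eq_not_iff.2 h⟩

def GroupCompatible (σ : Assignment) (n : ℕ) (i : Var) (g : Fin r → Bool) : Prop :=
  ∀ j v, σ (j.val * n + i) = some v → g j = v

lemma not_clSatBy_expand_iff {σ : Assignment} {C : Clause} {c : Var → Fin r → Bool} :
    ¬ clSatBy σ (expand n C c) ↔ ∀ l ∈ C, GroupCompatible σ n l.1 (c l.1) := by
  constructor
  · intro h l hl j v hv
    by_contra hne
    exact h ⟨_, mem_expand.2 ⟨l, hl, j, rfl⟩, by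
      rw [litSat, hv, Option.some_inj, Bool.eq_not_iff]; exact Ne.symm hne⟩
  · rintro h ⟨_, hmem, hsat⟩
    obtain ⟨l, hl, j, rfl⟩ := mem_expand.1 hmem
    simpa using h l hl j _ hsat

end Expansion

section Lifting

variable {n r : ℕ}

def FreeInEveryGroup (σ : Assignment) (n r : ℕ) : Prop :=
  ∀ i < n, ∃ J : Fin r, σ (J.val * n + i) = none

def groupOf (n r : ℕ) (β : Var → Bool) (i : Var) : Fin r → Bool := fun j => β (j.val * n + i)

lemma satisfiesC_expand_of_satisfiesC_parity {β : Var → Bool} {C : Clause}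
    {c : Var → Fin r → Bool} (hc : ∀ l ∈ C, parity (c l.1) = !l.2)
    (hC : satisfiesC (fun i => parity (groupOf n r β i)) C) : satisfiesC β (expand n C c) := by
  obtain ⟨l, hl, hpar⟩ := hC
  by_contra hns
  rw [satisfiesC_expand_iff] at hns
  push Not at hns
  have hgroup : groupOf n r β l.1 = c l.1 := funext (hns l hl)
  simp [hgroup, hc l hl] at hpar

lemma Unsat.paritySub {τ : Set Clause} (h : Unsat τ) (n r : ℕ) : Unsat (ParitySub n r τ) := by
  intro β
  obtain ⟨C, hC, hns⟩ := h fun i => parity (groupOf n r β i)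
  refine ⟨expand n C (groupOf n r β), mem_paritySub_iff.2 ⟨C, hC, _, fun l hl => ?_, rfl⟩, ?_⟩
  · exact Bool.eq_not_iff.2 fun hl' => hns ⟨l, hl, hl'⟩
  · simp [satisfiesC_expand_iff, groupOf]

lemma exists_compatible_groups {σ : Assignment}
    (hfree : FreeInEveryGroup σ n r) (a : Var → Bool) :
    ∃ w : Var → Fin r → Bool, ∀ i < n, parity (w i) = a i ∧ GroupCompatible σ n i (w i) := by
  have hgroup : ∀ i, ∃ g : Fin r → Bool, i < n → parity g = a i ∧ GroupCompatible σ n i g := by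
    intro i
    by_cases hi : i < n
    · obtain ⟨J, hJ⟩ := hfree i hi
      obtain ⟨g, hg⟩ := exists_parity_eq_of_eq_none (p := fun j => σ (j.val * n + i)) hJ (a i)
      exact ⟨g, fun _ => hg⟩
    · exact ⟨fun _ => false, fun h => absurd h hi⟩
  choose w hw using hgroup
  exact ⟨w, hw⟩

def ungroup (n r : ℕ) (w : Var → Fin r → Bool) : Var → Bool :=
  fun x => if h : x / n < r then w (x % n) ⟨x / n, h⟩ else false

lemma groupOf_extendAssignment_ungroup {σ : Assignment} {w : Var → Fin r → Bool} {i : Var}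
    (hi : i < n) (hw : GroupCompatible σ n i (w i)) :
    groupOf n r (extendAssignment σ (ungroup n r w)) i = w i := by
  funext j
  have hn : 0 < n := Nat.zero_lt_of_lt hi
  have hdiv : (j.val * n + i) / n = j := by
    rw [Nat.add_comm, Nat.add_mul_div_right _ _ hn, Nat.div_eq_of_lt hi, Nat.zero_add]
  have hmod : (j.val * n + i) % n = i := by
    rw [Nat.add_comm, Nat.add_mul_mod_self_right, Nat.mod_eq_of_lt hi]
  cases hσ : σ (j.val * n + i) with
  | none => simp [groupOf, extendAssignment, ungroup, hσ, hdiv, hmod]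
  | some v => simp [groupOf, extendAssignment, hσ, hw j v hσ]

lemma exists_compatible_lift {σ : Assignment} {a : Var → Bool} {C₀ : Clause}
    {c₀ : Var → Fin r → Bool} (hfree : FreeInEveryGroup σ n r)
    (hvars : ∀ y ∈ C₀.vars, y < n) (hc₀ : ∀ l ∈ C₀, parity (c₀ l.1) = !l.2)
    (ha : ¬ satisfiesC a C₀) (hσ : ¬ clSatBy σ (expand n C₀ c₀)) :
    ∃ β : Var → Bool, extendAssignment σ β = β ∧ (∀ i < n, parity (groupOf n r β i) = a i) ∧
      ∀ l ∈ C₀, groupOf n r β l.1 = c₀ l.1 := by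
  classical
  obtain ⟨w, hw⟩ := exists_compatible_groups hfree a
  let w' : Var → Fin r → Bool := fun i => if i ∈ C₀.vars then c₀ i else w i
  have hw' : ∀ i < n, parity (w' i) = a i ∧ GroupCompatible σ n i (w' i) := by
    intro i hi
    by_cases hiC : i ∈ C₀.vars
    · obtain ⟨l, hl, rfl⟩ := mem_image.1 hiC
      simp only [w', if_pos hiC, hc₀ l hl]
      exact ⟨(Bool.eq_not_iff.2 fun h => ha ⟨l, hl, h⟩).symm, not_clSatBy_expand_iff.1 hσ l hl⟩
    · simpa [w', hiC] using hw i hi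
  refine ⟨extendAssignment σ (ungroup n r w'), extendAssignment_idem _ _, fun i hi => ?_,
    fun l hl => ?_⟩
  · rw [groupOf_extendAssignment_ungroup hi (hw' i hi).2]
    exact (hw' i hi).1
  · have hlC : l.1 ∈ C₀.vars := mem_image_of_mem _ hl
    rw [groupOf_extendAssignment_ungroup (hvars _ hlC) (hw' _ (hvars _ hlC)).2]
    simp [w', hlC]

end Lifting

section Robustness

variable {n r : ℕ}

lemma freeInEveryGroup_of_subsingleton (hr : 2 ≤ r) {σ : Assignment}
    (hσ : {x : Var | σ x ≠ none ∧ x ∉ VarPw (r * n) ((r - 2) * n) id}.Subsingleton) :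
    FreeInEveryGroup σ n r := by
  intro i hi
  by_contra! hset
  have hout : ∀ J : Fin r, r - 2 ≤ J.val →
      J.val * n + i ∈ {x : Var | σ x ≠ none ∧ x ∉ VarPw (r * n) ((r - 2) * n) id} :=
    fun J hJ => ⟨hset J, fun hmem => absurd hmem.2 (by simp; nlinarith)⟩
  have heq := hσ (hout ⟨r - 2, by omega⟩ le_rfl) (hout ⟨r - 1, by omega⟩ (by simp only; omega))
  simp only [add_left_inj, mul_eq_mul_right_iff] at heq
  rcases heq with h | rfl
  · have h' : r - 2 = r - 1 := h
    omega
  · exact Nat.not_lt_zero i hi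

lemma paritySub_restrictCNF_minimal {τ : Set Clause} (hmin : MinUnsat τ)
    (hvars : ∀ C ∈ τ, ∀ y ∈ C.vars, y < n) {σ : Assignment}
    (hfree : FreeInEveryGroup σ n r) (τ' : Set Clause)
    (hsub : τ' ⊂ restrictCNF σ (ParitySub n r τ)) : ∃ α : Var → Bool, ∀ D ∈ τ', satisfiesC α D := by
  obtain ⟨D₀, hD₀, hD₀τ'⟩ := Set.exists_of_ssubset hsub
  obtain ⟨_, hE₀, hE₀σ, rfl⟩ := hD₀
  obtain ⟨C₀, hC₀, c₀, hc₀, rfl⟩ := mem_paritySub_iff.1 hE₀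
  obtain ⟨a, haS, haF⟩ := hmin.exists_critical hC₀
  obtain ⟨β, hβσ, hβa, hβc₀⟩ := exists_compatible_lift hfree (hvars C₀ hC₀) hc₀ haF hE₀σ
  refine ⟨β, fun D hD => ?_⟩
  obtain ⟨_, hE, hEσ, rfl⟩ := hsub.1 hD
  obtain ⟨C, hC, c, hc, rfl⟩ := mem_paritySub_iff.1 hE
  refine (satisfiesC_extendAssignment_iff.1 ?_).resolve_left hEσ
  rw [hβσ]
  obtain rfl | hCC := eq_or_ne C C₀
  · by_contra hns
    rw [satisfiesC_expand_iff] at hns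
    push Not at hns
    apply hD₀τ'
    rwa [expand_congr fun l hl => (hβc₀ l hl).symm.trans (funext (hns l hl))]
  · apply satisfiesC_expand_of_satisfiesC_parity hc
    obtain ⟨l, hl, h⟩ := haS C hC hCC
    exact ⟨l, hl, (hβa l.1 (hvars C hC l.1 (mem_image_of_mem _ hl))).trans h⟩

lemma exists_paritySub_mem_vars {τ : Set Clause} (hmin : MinUnsat τ)
    (hvars : ∀ C ∈ τ, ∀ y ∈ C.vars, y < n) (hall : ∀ y : Var, y < n → ∃ C ∈ τ, y ∈ C.vars)
    {σ : Assignment} (hfree : FreeInEveryGroup σ n r)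
    {x : Var} (hx : x < r * n) : ∃ D ∈ ParitySub n r τ, ¬ clSatBy σ D ∧ x ∈ D.vars := by
  have hn : 0 < n := Nat.pos_of_ne_zero (by rintro rfl; simp at hx)
  obtain ⟨C, hC, hxC⟩ := hall (x % n) (Nat.mod_lt x hn)
  obtain ⟨a, -, ha⟩ := hmin.exists_critical hC
  obtain ⟨w, hw⟩ := exists_compatible_groups hfree a
  have hlt : ∀ l ∈ C, l.1 < n := fun l hl => hvars C hC l.1 (mem_image_of_mem _ hl)
  refine ⟨expand n C w, mem_paritySub_iff.2 ⟨C, hC, w, fun l hl => ?_, rfl⟩,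
    not_clSatBy_expand_iff.2 fun l hl => (hw l.1 (hlt l hl)).2, ?_⟩
  · rw [(hw l.1 (hlt l hl)).1]
    exact Bool.eq_not_iff.2 fun h => ha ⟨l, hl, h⟩
  · obtain ⟨l, hl, hlx⟩ := mem_image.1 hxC
    refine mem_image.2 ⟨_, mem_expand.2 ⟨l, hl, ⟨x / n, (Nat.div_lt_iff_lt_mul hn).2 hx⟩, rfl⟩, ?_⟩
    simp [hlx, Nat.div_add_mod']

end Robustness

theorem stmt_15 (n r : ℕ) (hr : 2 ≤ r) (τ : Set Clause)
    (hmin : MinUnsat τ)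
    (hvars : ∀ C ∈ τ, ∀ y ∈ Clause.vars C, y < n)
    (hall : ∀ y : Var, y < n → ∃ C ∈ τ, y ∈ Clause.vars C) :
    Robust (r * n) ((r - 2) * n) id (ParitySub n r τ) := by
  intro σ hσn hσ
  have hfree := freeInEveryGroup_of_subsingleton hr hσ
  exact ⟨⟨(hmin.1.paritySub n r).restrictCNF σ, paritySub_restrictCNF_minimal hmin hvars hfree⟩,
    fun x hx => exists_paritySub_mem_vars hmin hvars hall hfree (hσn x hx)⟩
end

section
/- Learning-derivation structure lemma: if a clause D is in C_j(S) for a CDCL state S = (ℂ, t) with t = [y₁*=a₁,…,y_r*=a_r], then there exist clauses C₁,…,C_{k+1} ∈ ℂ and indices j ≤ i₁ < ⋯ < i_k ≤ r such that C_{k+1}|_t = 0, C_ν|_{t[≤ i_ν −1]} = y_{i_ν}^{a_{i_ν}} for every ν ∈ [k], and D = C_{k+1} ∘^{y_{i_k}} C_k ∘ ⋯ ∘^{y_{i_1}} C₁ with all the resolution operators non-null. -/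
abbrev TEntry := Var × Bool × Bool

abbrev Trail := List TEntry

def Trail.assign (t : Trail) : Assignment :=
  fun x => (t.find? (fun e => e.1 == x)).map (fun e => e.2.1)

def Trail.varList (t : Trail) : List Var := t.map (fun e => e.1)

def restrictedIsUnit (σ : Assignment) (C : Clause) (l : Lit) : Prop :=
  l ∈ C ∧ σ l.1 = none ∧ ∀ m ∈ C, m ≠ l → litFalse σ m
def prefixAssign (t : Trail) (k : ℕ) : Assignment := Trail.assign (t.take k)

def stepSet (𝒞 : Set Clause) (t : Trail) (k : ℕ) (prev : Set Clause) : Set Clause :=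
  match t[k - 1]? with
  | none => prev
  | some e =>
      if e.2.2 then prev
      else
        {D ∈ prev | (e.1, !e.2.1) ∉ D} ∪
          {F | ∃ D ∈ prev, (e.1, !e.2.1) ∈ D ∧
            ∃ C ∈ 𝒞, restrictedIsUnit (prefixAssign t (k - 1)) C (e.1, e.2.1) ∧
              F = resolve e.1 C D}

def CsetDown (𝒞 : Set Clause) (t : Trail) : ℕ → Set Clause
  | 0 => {D ∈ 𝒞 | Clause.falsified (Trail.assign t) D}
  | m + 1 => stepSet 𝒞 t (t.length - m) (CsetDown 𝒞 t m)

/-- The literal assigned at the (1-based) position `i` of the trail. -/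
def trailLit (t : Trail) (i : ℕ) : Lit :=
  ((t.getD (i - 1) (0, false, false)).1, (t.getD (i - 1) (0, false, false)).2.1)

/-- `chainHolds t acc L D` says that starting from `acc` and successively resolving
with the clauses recorded in `L` (each on the variable assigned at the recorded
trail position), every resolution operator is non-null and the final result is `D`. -/
def chainHolds (t : Trail) : Clause → List (ℕ × Clause) → Clause → Prop
  | acc, [], D => D = acc
  | acc, p :: rest, D =>
      resolvableOn (trailLit t p.1).1 acc p.2 ∧
        chainHolds t (resolve (trailLit t p.1).1 acc p.2) rest D

/-!
A clause of `C_j` is either already in `C_{j+1}` or the resolvent of a clause of `C_{j+1}` with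
a reason clause for the `j`-th trail literal, so by reverse induction on `j` its derivation is that
of the clause of `C_{j+1}`, extended by one resolution at position `j`. That step is non-null
because every clause of `C_{j+1}` is falsified by the trail, while every literal of the reason
clause other than the pivot is already falsified by the trail prefix before position `j`.
-/

lemma resolve_comm (x : Var) (C D : Clause) : resolve x C D = resolve x D C :=
  Finset.union_comm _ _

lemma litFalse_of_prefixAssign {t : Trail} {k : ℕ} {l : Lit}
    (h : litFalse (prefixAssign t k) l) : litFalse (Trail.assign t) l := by
  obtain ⟨e, he, hval⟩ := Option.map_eq_some_iff.mp h
  have hfind : t.find? (fun e => e.1 == l.1) = some e := by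
    rw [← List.take_append_drop k t, List.find?_append, he]
    rfl
  simp only [litFalse, Trail.assign, hfind, Option.map_some, hval]

section Resolution

variable {σ τ : Assignment} {C D : Clause} {l : Lit}

lemma Clause.falsified_resolve (hD : D.falsified τ) (hC : restrictedIsUnit σ C l)
    (hστ : ∀ m, litFalse σ m → litFalse τ m) : (resolve l.1 C D).falsified τ := by
  intro m hm
  rcases Finset.mem_union.mp hm with hm | hm
  · obtain ⟨hmC, hmx⟩ := Finset.mem_filter.mp hm
    exact hστ m (hC.2.2 m hmC (by rintro rfl; exact hmx rfl))
  · exact hD m (Finset.mem_filter.mp hm).1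

/-- A second clashing literal would be false under `τ` in both clauses. -/
lemma resolvableOn_of_restrictedIsUnit (hD : D.falsified τ) (hpiv : (l.1, !l.2) ∈ D)
    (hC : restrictedIsUnit σ C l) (hστ : ∀ m, litFalse σ m → litFalse τ m) :
    resolvableOn l.1 D C := by
  refine ⟨⟨!l.2, hpiv, by simpa using hC.1⟩, fun y b hy hbD hbC => ?_⟩
  have hne : ((y, !b) : Lit) ≠ l := fun h => hy (congrArg Prod.fst h)
  have hτ₁ : τ y = some b := by simpa [litFalse] using hστ _ (hC.2.2 _ hbC hne)
  have hτ₂ : τ y = some (!b) := hD _ hbD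
  simp [hτ₁] at hτ₂

end Resolution

lemma chainHolds_append_singleton {t : Trail} {q : ℕ × Clause} :
    ∀ {L : List (ℕ × Clause)} {acc E : Clause}, chainHolds t acc L E →
      resolvableOn (trailLit t q.1).1 E q.2 →
      chainHolds t acc (L ++ [q]) (resolve (trailLit t q.1).1 E q.2)
  | [], _, _, rfl, hq => ⟨hq, rfl⟩
  | _ :: _, _, _, ⟨hp, hrest⟩, hq => ⟨hp, chainHolds_append_singleton hrest hq⟩

section CsetDown

variable {𝒞 : Set Clause} {t : Trail}

lemma mem_CsetDown_succ {m : ℕ} {D : Clause} (hD : D ∈ CsetDown 𝒞 t (m + 1)) :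
    D ∈ CsetDown 𝒞 t m ∨
      ∃ D' ∈ CsetDown 𝒞 t m,
        ((trailLit t (t.length - m)).1, !(trailLit t (t.length - m)).2) ∈ D' ∧
        ∃ C ∈ 𝒞,
          restrictedIsUnit (prefixAssign t (t.length - m - 1)) C (trailLit t (t.length - m)) ∧
          D = resolve (trailLit t (t.length - m)).1 C D' := by
  simp only [CsetDown, stepSet] at hD
  split at hD
  · exact Or.inl hD
  · rename_i e he
    have hlit : trailLit t (t.length - m) = (e.1, e.2.1) := by
      simp [trailLit, List.getD_eq_getElem?_getD, he]
    rw [hlit]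
    split at hD
    · exact Or.inl hD
    · rcases hD with hD | hD
      exacts [Or.inl hD.1, Or.inr hD]

lemma falsified_of_mem_CsetDown {m : ℕ} {D : Clause} (hD : D ∈ CsetDown 𝒞 t m) :
    D.falsified (Trail.assign t) := by
  induction m generalizing D with
  | zero => exact hD.2
  | succ m ih =>
    rcases mem_CsetDown_succ hD with hD | ⟨D', hD', -, C, -, hC, rfl⟩
    · exact ih hD
    · exact Clause.falsified_resolve (ih hD') hC fun _ => litFalse_of_prefixAssign

end CsetDown

/-- `D` arises from a clause of `𝒞` falsified by `t` by resolving, at strictly decreasing trail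
positions in `[lo, t.length]`, with reason clauses of the literals at those positions. -/
def HasTrailDerivation (𝒞 : Set Clause) (t : Trail) (lo : ℕ) (D : Clause) : Prop :=
  ∃ (L : List (ℕ × Clause)) (C : Clause),
    C ∈ 𝒞 ∧ Clause.falsified (Trail.assign t) C ∧
    (∀ p ∈ L, p.2 ∈ 𝒞) ∧
    (∀ p ∈ L, lo ≤ p.1 ∧ p.1 ≤ t.length) ∧
    L.IsChain (fun p q => q.1 < p.1) ∧
    (∀ p ∈ L, restrictedIsUnit (prefixAssign t (p.1 - 1)) p.2 (trailLit t p.1)) ∧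
    chainHolds t C L D

namespace HasTrailDerivation

variable {𝒞 : Set Clause} {t : Trail} {lo : ℕ} {D : Clause}

lemma of_falsified (hD : D ∈ 𝒞) (hDf : D.falsified (Trail.assign t)) :
    HasTrailDerivation 𝒞 t lo D :=
  ⟨[], D, hD, hDf, by simp, by simp, List.isChain_nil, by simp, rfl⟩

lemma mono {lo' : ℕ} (h : HasTrailDerivation 𝒞 t lo D) (hlo : lo' ≤ lo) :
    HasTrailDerivation 𝒞 t lo' D := by
  obtain ⟨L, C, hC, hCf, hL𝒞, hpos, hchain, hunit, hres⟩ := h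
  exact ⟨L, C, hC, hCf, hL𝒞, fun p hp => ⟨hlo.trans (hpos p hp).1, (hpos p hp).2⟩,
    hchain, hunit, hres⟩

lemma resolve {k : ℕ} {C : Clause} (h : HasTrailDerivation 𝒞 t (k + 1) D) (hk : k ≤ t.length)
    (hDf : D.falsified (Trail.assign t)) (hpiv : ((trailLit t k).1, !(trailLit t k).2) ∈ D)
    (hC : C ∈ 𝒞) (hunit : restrictedIsUnit (prefixAssign t (k - 1)) C (trailLit t k)) :
    HasTrailDerivation 𝒞 t k (_root_.resolve (trailLit t k).1 C D) := by
  obtain ⟨L, C₀, hC₀, hC₀f, hL𝒞, hpos, hchain, hLunit, hres⟩ := h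
  have hstep : resolvableOn (trailLit t k).1 D C :=
    resolvableOn_of_restrictedIsUnit hDf hpiv hunit fun _ => litFalse_of_prefixAssign
  refine ⟨L ++ [(k, C)], C₀, hC₀, hC₀f,
    List.forall_mem_append.mpr ⟨hL𝒞, by simpa using hC⟩,
    List.forall_mem_append.mpr
      ⟨fun p hp => ⟨Nat.le_of_succ_le (hpos p hp).1, (hpos p hp).2⟩, by simpa using hk⟩,
    ?_, List.forall_mem_append.mpr ⟨hLunit, by simpa using hunit⟩, ?_⟩
  · refine List.isChain_append.mpr ⟨hchain, List.isChain_singleton _, ?_⟩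
    rintro p hp q (rfl | _)
    exact (hpos p (List.mem_of_mem_getLast? hp)).1
  · rw [resolve_comm]
    exact chainHolds_append_singleton hres hstep

end HasTrailDerivation

/-- The bound `t.length + 1` includes the junk step at position `0`, which by truncated
subtraction repeats the step at position `1`. -/
lemma hasTrailDerivation_of_mem_CsetDown {𝒞 : Set Clause} {t : Trail} :
    ∀ {m : ℕ}, m ≤ t.length + 1 → ∀ {D : Clause}, D ∈ CsetDown 𝒞 t m →
      HasTrailDerivation 𝒞 t (t.length + 1 - m) D
  | 0, _, _, hD => .of_falsified hD.1 hD.2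
  | m + 1, hm, D, hD => by
    have ih := @hasTrailDerivation_of_mem_CsetDown 𝒞 t m (by omega)
    rw [show t.length + 1 - m = t.length - m + 1 by omega] at ih
    rw [show t.length + 1 - (m + 1) = t.length - m by omega]
    rcases mem_CsetDown_succ hD with hD | ⟨D', hD', hpiv, C, hC, hunit, rfl⟩
    · exact (ih hD).mono (Nat.le_succ _)
    · exact (ih hD').resolve (by omega) (falsified_of_mem_CsetDown hD') hpiv hC hunit

theorem stmt_16_general (𝒞 : Set Clause) (t : Trail)
    (j : ℕ)
    (D : Clause) (hD : D ∈ CsetDown 𝒞 t (t.length + 1 - j)) :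
    ∃ (L : List (ℕ × Clause)) (Ck1 : Clause),
      Ck1 ∈ 𝒞 ∧ Clause.falsified (Trail.assign t) Ck1 ∧
      (∀ p ∈ L, p.2 ∈ 𝒞) ∧
      (∀ p ∈ L, j ≤ p.1 ∧ p.1 ≤ t.length) ∧
      -- the recorded positions are i_k > i_{k−1} > ⋯ > i_1
      L.Chain' (fun p q => q.1 < p.1) ∧
      (∀ p ∈ L, restrictedIsUnit (prefixAssign t (p.1 - 1)) p.2 (trailLit t p.1)) ∧
      chainHolds t Ck1 L D := by
  obtain ⟨L, C, hC, hCf, hL𝒞, hpos, hchain, hunit, hres⟩ :=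
    hasTrailDerivation_of_mem_CsetDown (by omega) hD
  refine ⟨L, C, hC, hCf, hL𝒞, fun p hp => ?_, hchain, hunit, hres⟩
  have := hpos p hp
  omega

theorem stmt_16 (𝒞 : Set Clause) (t : Trail) (ht : (Trail.varList t).Nodup)
    (j : ℕ) (hj1 : 1 ≤ j) (hj2 : j ≤ t.length + 1)
    (D : Clause) (hD : D ∈ CsetDown 𝒞 t (t.length + 1 - j)) :
    ∃ (L : List (ℕ × Clause)) (Ck1 : Clause),
      Ck1 ∈ 𝒞 ∧ Clause.falsified (Trail.assign t) Ck1 ∧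
      (∀ p ∈ L, p.2 ∈ 𝒞) ∧
      (∀ p ∈ L, j ≤ p.1 ∧ p.1 ≤ t.length) ∧
      -- the recorded positions are i_k > i_{k−1} > ⋯ > i_1
      L.Chain' (fun p q => q.1 < p.1) ∧
      (∀ p ∈ L, restrictedIsUnit (prefixAssign t (p.1 - 1)) p.2 (trailLit t p.1)) ∧
      chainHolds t Ck1 L D :=
  stmt_16_general 𝒞 t j D hD
end

section
/- The CDCL transition graph Γₙ is acyclic: there is no cyclic sequence of states S₀ ⟹ S₁ ⟹ ⋯ ⟹ S_m = S₀ with m ≥ 1 in the basic CDCL model. -/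
structure CState where
  clauses : Finset Clause
  trail : Trail

/-- Transitions of the basic CDCL model: decision/unit-propagation actions append an
assignment on a fresh variable to the trail, and learning actions add a new clause
and replace the trail by one of its prefixes. -/
inductive CStep : CState → CState → Prop
  | extend (𝒞 : Finset Clause) (t : Trail) (e : TEntry)
      (h : e.1 ∉ Trail.varList t) : CStep ⟨𝒞, t⟩ ⟨𝒞, t ++ [e]⟩
  | learn (𝒞 : Finset Clause) (t : Trail) (C : Clause) (hC : C ∉ 𝒞)
      (t' : Trail) (h : t' <+: t) : CStep ⟨𝒞, t⟩ ⟨insert C 𝒞, t'⟩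

/-! Every step strictly increases the pair (number of clauses, trail length) lexicographically:
learning adds a new clause, and decisions and unit propagations lengthen the trail while keeping
the clauses fixed. A cycle would make this pair smaller than itself. -/

def CState.rank (S : CState) : ℕ ×ₗ ℕ := toLex (S.clauses.card, S.trail.length)

lemma CStep.rank_lt {S T : CState} (h : CStep S T) : S.rank < T.rank := by
  cases h with
  | extend => exact Prod.Lex.toLex_lt_toLex.2 (Or.inr ⟨rfl, by simp⟩)
  | learn _ _ _ hC =>
    exact Prod.Lex.toLex_lt_toLex.2 (Or.inl (by simp [Finset.card_insert_of_notMem hC]))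

lemma CState.rank_lt_of_transGen {S T : CState} (h : Relation.TransGen CStep S T) :
    S.rank < T.rank := by
  have h' := h.lift CState.rank fun _ _ => CStep.rank_lt
  rwa [Relation.transGen_eq_self] at h'

theorem stmt_17 : ∀ S : CState, ¬ Relation.TransGen CStep S S :=
  fun _ h => (CState.rank_lt_of_transGen h).false
end
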